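/- Fix m and k with 2k ≤ m. Let f : [m]_k → ℕ be a committee scoring function satisfying the fixed-majority criterion. Then for every t ∈ {0,…,k}, f(I_t) = f(J_t), where I_t = (1,…,t, k+1,…,k+(k−t)) and J_t = (k−t+1,…,k, m−(k−t)+1,…,m). -/

import Mathlib

/-!
For `t < k`, domination already gives `f J_t ≤ f I_t`. For the converse, let `W` be the top `k`
candidates and `S` the committee occupying the positions `I_t` in the identity ranking; a second
ranking `σ` puts `S` on top and `W` at the positions `J_t`. With `A = f(1, …, k) - f I_t`, the
election of `A + 1` identity voters and `A` copies of `σ` has a majority ranking `W` on top, so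
`W` beats `S`:
`(A + 1) f I_t + A f(1, …, k) < (A + 1) f(1, …, k) + A f J_t`, that is `A f I_t < A (f J_t + 1)`.
-/

open Finset

section CommitteeScoring

variable {m k : ℕ}

/-- The paper's `pos_v(S)`, with positions counted from 1. -/
def committeePositions (k : ℕ) (v : Fin m ≃ Fin m) (S : Finset (Fin m)) : Fin k → ℕ :=
  fun t => ((S.image fun c => (v c : ℕ) + 1).sort (· ≤ ·)).getD t 0

def electionScore (f : (Fin k → ℕ) → ℕ) (V : List (Fin m ≃ Fin m)) (S : Finset (Fin m)) : ℕ :=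
  (V.map fun v => f (committeePositions k v S)).sum

def FixedMajority (m : ℕ) (f : (Fin k → ℕ) → ℕ) : Prop :=
  ∀ (V : List (Fin m ≃ Fin m)) (W : Finset (Fin m)), W.card = k →
    V.length < 2 * V.countP (fun v => decide (∀ c ∈ W, (v c : ℕ) < k)) →
    ∀ S : Finset (Fin m), S.card = k → S ≠ W → electionScore f V S < electionScore f V W

lemma electionScore_replicate_append (f : (Fin k → ℕ) → ℕ) (a b : ℕ) (v w : Fin m ≃ Fin m)
    (S : Finset (Fin m)) :
    electionScore f (List.replicate a v ++ List.replicate b w) S =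
      a * f (committeePositions k v S) + b * f (committeePositions k w S) := by
  simp [electionScore, List.sum_replicate]

lemma le_of_weighted_sum_lt {a b c d : ℕ} (had : a ≤ d)
    (h : (a - b + 1) * b + (a - b) * d < (a - b + 1) * a + (a - b) * c) : b ≤ c := by
  rcases le_or_gt b a with hba | hab
  · obtain ⟨A, rfl⟩ := Nat.exists_eq_add_of_le hba
    rw [Nat.add_sub_cancel_left] at h
    have : A * b < A * (c + 1) := by nlinarith
    exact Nat.lt_succ_iff.mp (Nat.lt_of_mul_lt_mul_left this)
  · rw [Nat.sub_eq_zero_of_le hab.le] at h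
    omega

theorem FixedMajority.le_of_ranked_top {f : (Fin k → ℕ) → ℕ} (hf : FixedMajority m f)
    {v₁ v₂ : Fin m ≃ Fin m} {W S : Finset (Fin m)} (hW : W.card = k) (hS : S.card = k)
    (hSW : S ≠ W) (htop : ∀ c ∈ W, (v₁ c : ℕ) < k)
    (h : f (committeePositions k v₁ W) ≤ f (committeePositions k v₂ S)) :
    f (committeePositions k v₁ S) ≤ f (committeePositions k v₂ W) := by
  set A := f (committeePositions k v₁ W) - f (committeePositions k v₁ S)
  have hmaj : (List.replicate (A + 1) v₁ ++ List.replicate A v₂).length <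
      2 * (List.replicate (A + 1) v₁ ++ List.replicate A v₂).countP
        (fun v => decide (∀ c ∈ W, (v c : ℕ) < k)) := by
    simp only [List.countP_append, List.countP_replicate, List.length_append,
      List.length_replicate, decide_eq_true htop, if_true]
    omega
  have hwin := hf _ W hW hmaj S hS hSW
  rw [electionScore_replicate_append, electionScore_replicate_append] at hwin
  exact le_of_weighted_sum_lt h hwin

/-- In the paper's notation `I_t = blockPositions k 0 k t`,
`J_t = blockPositions k (k - t) (m - (k - t)) t`, and `blockPositions k 0 k k = (1, …, k)`. -/
def blockPositions (k a b t : ℕ) : Fin k → ℕ :=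
  fun s => if (s : ℕ) < t then a + s + 1 else b + (s - t) + 1

lemma blockPositions_strictMono {a b t : ℕ} (hab : a + t ≤ b) :
    StrictMono (blockPositions k a b t) := fun s s' hss' => by
  simp only [blockPositions, Fin.lt_def] at hss' ⊢
  split_ifs <;> omega

lemma blockPositions_mem_Icc {a b t : ℕ} (hab : a + t ≤ b) (hbm : b + (k - t) ≤ m)
    (s : Fin k) : 1 ≤ blockPositions k a b t s ∧ blockPositions k a b t s ≤ m := by
  have := s.isLt
  simp only [blockPositions]
  split_ifs <;> omega

lemma blockPositions_mono {a a' b b' t : ℕ} (ha : a ≤ a') (hb : b ≤ b') :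
    blockPositions k a b t ≤ blockPositions k a' b' t := fun s => by
  simp only [blockPositions]
  split_ifs <;> omega

lemma image_rank_eq_toFinset {v : Fin m ≃ Fin m} {S : Finset (Fin m)} {L : List ℕ}
    (hL : ∀ x ∈ L, 1 ≤ x ∧ x ≤ m) (hS : ∀ c, c ∈ S ↔ (v c : ℕ) + 1 ∈ L) :
    S.image (fun c => (v c : ℕ) + 1) = L.toFinset := by
  ext x
  simp only [mem_image, List.mem_toFinset]
  constructor
  · rintro ⟨c, hc, rfl⟩
    exact (hS c).1 hc
  · intro hx
    obtain ⟨h1, hm⟩ := hL x hx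
    refine ⟨v.symm ⟨x - 1, by omega⟩, (hS _).2 ?_, ?_⟩ <;> simp [Nat.sub_add_cancel h1, hx]

section Blocks

variable {v : Fin m ≃ Fin m} {S : Finset (Fin m)} {a b t : ℕ}

lemma pairwise_range'_append_range' (hab : a + t ≤ b) (q : ℕ) :
    (List.range' (a + 1) t ++ List.range' (b + 1) q).Pairwise (· < ·) := by
  refine List.pairwise_append.2
    ⟨List.pairwise_lt_range' .., List.pairwise_lt_range' .., ?_⟩
  simp only [List.mem_range'_1]
  omega

lemma getD_range'_append_range' {q s : ℕ} (h : s < t + q) :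
    (List.range' (a + 1) t ++ List.range' (b + 1) q).getD s 0 =
      if s < t then a + s + 1 else b + (s - t) + 1 := by
  rw [List.getD_eq_getElem?_getD]
  split_ifs with hst
  · rw [List.getElem?_append_left (by simpa using hst)]
    simp only [List.getElem?_range' hst, Option.getD_some]
    omega
  · rw [List.getElem?_append_right (by simp; omega)]
    simp only [List.length_range', List.getElem?_range' (by omega : s - t < q),
      Option.getD_some]
    omega

lemma image_rank_eq_range'_append_range' (hbm : b + (k - t) ≤ m) (hab : a + t ≤ b)
    (hS : ∀ c, c ∈ S ↔ a ≤ v c ∧ (v c : ℕ) < a + t ∨ b ≤ v c ∧ (v c : ℕ) < b + (k - t)) :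
    S.image (fun c => (v c : ℕ) + 1) =
      (List.range' (a + 1) t ++ List.range' (b + 1) (k - t)).toFinset := by
  refine image_rank_eq_toFinset ?_ fun c => ?_
  · simp only [List.mem_append, List.mem_range'_1]
    omega
  · simp only [hS, List.mem_append, List.mem_range'_1]
    omega

lemma card_eq_of_mem_iff_rank_mem_blocks (ht : t ≤ k) (hbm : b + (k - t) ≤ m)
    (hab : a + t ≤ b)
    (hS : ∀ c, c ∈ S ↔ a ≤ v c ∧ (v c : ℕ) < a + t ∨ b ≤ v c ∧ (v c : ℕ) < b + (k - t)) :
    S.card = k := by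
  have hinj : Function.Injective fun c => (v c : ℕ) + 1 :=
    fun c d h => v.injective (Fin.ext (by simpa using h))
  rw [← card_image_of_injective S hinj, image_rank_eq_range'_append_range' hbm hab hS,
    List.toFinset_card_of_nodup (pairwise_range'_append_range' hab _).nodup]
  simp only [List.length_append, List.length_range']
  omega

lemma committeePositions_eq_blockPositions (hbm : b + (k - t) ≤ m) (hab : a + t ≤ b)
    (hS : ∀ c, c ∈ S ↔ a ≤ v c ∧ (v c : ℕ) < a + t ∨ b ≤ v c ∧ (v c : ℕ) < b + (k - t)) :
    committeePositions k v S = blockPositions k a b t := by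
  have hsorted := pairwise_range'_append_range' hab (k - t)
  have hsort := (List.toFinset_sort (· ≤ ·) hsorted.nodup).2 (hsorted.imp le_of_lt)
  funext s
  rw [committeePositions, image_rank_eq_range'_append_range' hbm hab hS, hsort,
    getD_range'_append_range' (by omega)]
  rfl

end Blocks

def topCommittee (m k : ℕ) : Finset (Fin m) := univ.filter fun c => (c : ℕ) < k

def splitCommittee (m k t : ℕ) : Finset (Fin m) :=
  univ.filter fun c => (c : ℕ) < t ∨ k ≤ c ∧ (c : ℕ) < 2 * k - t

/-- Ranks `splitCommittee m k t` on top and `topCommittee m k` at the positions `J_t`. -/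
noncomputable def splitRanking (hmk : 2 * k ≤ m) (t : ℕ) : Fin m ≃ Fin m :=
  Equiv.ofBijective
    (fun c => ⟨if (c : ℕ) < t then c + (k - t) else if (c : ℕ) < k then c + (m - k)
      else if (c : ℕ) < 2 * k - t then c - k else c - (k - t),
      by have := c.isLt; split_ifs <;> omega⟩)
    (Finite.injective_iff_bijective.mp fun c d h => by
      have := c.isLt
      have := d.isLt
      simp only [Fin.mk.injEq] at h
      ext
      split_ifs at h <;> omega)

lemma splitRanking_apply (hmk : 2 * k ≤ m) (t : ℕ) (c : Fin m) :
    (splitRanking hmk t c : ℕ) = if (c : ℕ) < t then c + (k - t)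
      else if (c : ℕ) < k then c + (m - k)
      else if (c : ℕ) < 2 * k - t then c - k else c - (k - t) := rfl

section Election

variable {t : ℕ}

lemma card_topCommittee (hmk : 2 * k ≤ m) : (topCommittee m k).card = k :=
  card_eq_of_mem_iff_rank_mem_blocks (v := Equiv.refl (Fin m)) (a := 0) (b := k) le_rfl
    (by omega) (by omega) fun c => by
      simp only [topCommittee, mem_filter, mem_univ, true_and, Equiv.refl_apply]
      omega

lemma card_splitCommittee (hmk : 2 * k ≤ m) (ht : t ≤ k) : (splitCommittee m k t).card = k :=
  card_eq_of_mem_iff_rank_mem_blocks (v := Equiv.refl (Fin m)) (a := 0) (b := k) ht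
    (by omega) (by omega) fun c => by
      simp only [splitCommittee, mem_filter, mem_univ, true_and, Equiv.refl_apply]
      omega

lemma splitCommittee_ne_topCommittee (hmk : 2 * k ≤ m) (htk : t < k) :
    splitCommittee m k t ≠ topCommittee m k := fun h => by
  have hk : (⟨k, by omega⟩ : Fin m) ∈ splitCommittee m k t := by
    simp only [splitCommittee, mem_filter, mem_univ, true_and]
    omega
  simp [h, topCommittee] at hk

lemma committeePositions_refl_topCommittee (hmk : 2 * k ≤ m) :
    committeePositions k (Equiv.refl (Fin m)) (topCommittee m k) = blockPositions k 0 k k :=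
  committeePositions_eq_blockPositions (by omega) (by omega) fun c => by
    simp only [topCommittee, mem_filter, mem_univ, true_and, Equiv.refl_apply]
    omega

lemma committeePositions_refl_splitCommittee (hmk : 2 * k ≤ m) (ht : t ≤ k) :
    committeePositions k (Equiv.refl (Fin m)) (splitCommittee m k t) = blockPositions k 0 k t :=
  committeePositions_eq_blockPositions (by omega) (by omega) fun c => by
    simp only [splitCommittee, mem_filter, mem_univ, true_and, Equiv.refl_apply]
    omega

lemma committeePositions_splitRanking_splitCommittee (hmk : 2 * k ≤ m) (ht : t ≤ k) :
    committeePositions k (splitRanking hmk t) (splitCommittee m k t) = blockPositions k 0 k k :=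
  committeePositions_eq_blockPositions (by omega) (by omega) fun c => by
    have := c.isLt
    simp only [splitCommittee, mem_filter, mem_univ, true_and, splitRanking_apply]
    split_ifs <;> omega

lemma committeePositions_splitRanking_topCommittee (hmk : 2 * k ≤ m) (ht : t ≤ k) :
    committeePositions k (splitRanking hmk t) (topCommittee m k) =
      blockPositions k (k - t) (m - (k - t)) t :=
  committeePositions_eq_blockPositions (by omega) (by omega) fun c => by
    have := c.isLt
    simp only [topCommittee, mem_filter, mem_univ, true_and, splitRanking_apply]
    split_ifs <;> omega

end Election

end CommitteeScoring

/-- under the fixed-majority criterion, `f(I_t) = f(J_t)` for all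
`t ∈ {0,…,k}`, where (1-indexed) `I_t = (1,…,t,k+1,…,k+(k−t))` and
`J_t = (k−t+1,…,k, m−(k−t)+1,…,m)`. -/
theorem fixed_majority_f_It_eq_f_Jt (m k : ℕ) (hmk : 2 * k ≤ m)
    (f : (Fin k → ℕ) → ℕ)
    (hdom : ∀ I J : Fin k → ℕ, StrictMono I → StrictMono J →
      (∀ t, 1 ≤ I t ∧ I t ≤ m) → (∀ t, 1 ≤ J t ∧ J t ≤ m) →
      (∀ t, I t ≤ J t) → f J ≤ f I)
    (score : List (Fin m ≃ Fin m) → Finset (Fin m) → ℕ)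
    (hscore : ∀ V S, score V S =
      (V.map (fun v => f (fun t =>
        ((S.image (fun c => (v c : ℕ) + 1)).sort (· ≤ ·)).getD t 0))).sum)
    (hfm : ∀ (V : List (Fin m ≃ Fin m)) (W : Finset (Fin m)), W.card = k →
      V.length < 2 * V.countP (fun v => decide (∀ c ∈ W, (v c : ℕ) < k)) →
      ∀ S : Finset (Fin m), S.card = k → S ≠ W → score V S < score V W) :
    ∀ t ≤ k,
      f (fun s => if (s : ℕ) < t then (s : ℕ) + 1 else k + ((s : ℕ) - t) + 1) =
      f (fun s => if (s : ℕ) < t then k - t + (s : ℕ) + 1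
                  else m - (k - t) + ((s : ℕ) - t) + 1) := by
  intro t ht
  have hfixed : FixedMajority m f := fun V W hW hV S hS hSW => by
    have h := hfm V W hW hV S hS hSW
    rwa [hscore, hscore] at h
  suffices f (blockPositions k 0 k t) = f (blockPositions k (k - t) (m - (k - t)) t) by
    unfold blockPositions at this
    simpa only [zero_add] using this
  rcases ht.lt_or_eq with htk | rfl
  · apply le_antisymm
    · have h := hfixed.le_of_ranked_top (v₁ := Equiv.refl _) (v₂ := splitRanking hmk t)
        (card_topCommittee hmk) (card_splitCommittee hmk ht)
        (splitCommittee_ne_topCommittee hmk htk) (fun c hc => by simpa [topCommittee] using hc)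
        (by rw [committeePositions_refl_topCommittee hmk,
          committeePositions_splitRanking_splitCommittee hmk ht])
      rwa [committeePositions_refl_splitCommittee hmk ht,
        committeePositions_splitRanking_topCommittee hmk ht] at h
    · exact hdom _ _ (blockPositions_strictMono (by omega)) (blockPositions_strictMono (by omega))
        (blockPositions_mem_Icc (by omega) (by omega)) (blockPositions_mem_Icc (by omega) (by omega))
        (blockPositions_mono (by omega) (by omega))
  · congr 1
    funext s
    simp [blockPositions, s.isLt]
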